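/- arXiv:2202.08351 — 2 statements merged into one kernel-verified Lean document; each statement's English description precedes it below -/
import Mathlib

section
/- (Gordan's Alternative Theorem) Let U: ℝ^n → ℝ^m be a linear map. Exactly one of the following holds: (a) there exists x ∈ ℝ^n with all components of Ux strictly positive; (b) there exists c ∈ ℝ^m with c ≥ 0 componentwise, c ≠ 0, and Uᵀc = 0. -/
/-!
Everything is decided by whether `0` lies in the convex hull of the rows of `U`. If it does, the
convex weights form a `c ≥ 0`, `c ≠ 0` with `Uᵀc = 0`. If it does not, Hahn–Banach separates `0`
from this compact convex set by a functional `y ↦ x ⬝ᵥ y` that is positive on every row, i.e.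
`Ux > 0`. The two alternatives exclude each other since `c ⬝ᵥ Ux = Uᵀc ⬝ᵥ x` would be both
positive and zero.
-/

open Matrix Set

theorem Matrix.dotProduct_pos_of_nonneg_of_ne_zero {R n : Type*} [Semiring R] [PartialOrder R]
    [IsStrictOrderedRing R] [Fintype n] {v w : n → R} (hv : 0 ≤ v) (hv0 : v ≠ 0)
    (hw : ∀ i, 0 < w i) : 0 < v ⬝ᵥ w := by
  obtain ⟨i, hi⟩ := Function.ne_iff.mp hv0
  exact Finset.sum_pos' (fun j _ => mul_nonneg (hv j) (hw j).le)
    ⟨i, Finset.mem_univ i, mul_pos ((hv i).lt_of_ne' hi) (hw i)⟩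

theorem Matrix.not_forall_mulVec_pos_of_transpose_mulVec_eq_zero {R m n : Type*} [CommSemiring R]
    [PartialOrder R] [IsStrictOrderedRing R] [Fintype m] [Fintype n] {U : Matrix m n R}
    {c : m → R} (hc : 0 ≤ c) (hc0 : c ≠ 0) (hUc : Uᵀ *ᵥ c = 0) (x : n → R) :
    ¬ ∀ i, 0 < (U *ᵥ x) i := fun hx => by
  have hzero : c ⬝ᵥ U *ᵥ x = 0 := by
    rw [dotProduct_mulVec, ← mulVec_transpose, hUc, zero_dotProduct]
  exact (dotProduct_pos_of_nonneg_of_ne_zero hc hc0 hx).ne' hzero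

theorem Matrix.convexHull_range_eq_image_stdSimplex {𝕜 m n : Type*} [Field 𝕜] [LinearOrder 𝕜]
    [IsStrictOrderedRing 𝕜] [Fintype m] (U : Matrix m n 𝕜) :
    convexHull 𝕜 (range U.row) = (· ᵥ* U) '' stdSimplex 𝕜 m := by
  classical
  rw [← convexHull_rangle_single_eq_stdSimplex]
  change _ = U.vecMulLinear '' _
  rw [LinearMap.image_convexHull, ← range_comp]
  congr 2
  ext i : 1
  simp

theorem Matrix.exists_nonneg_ne_zero_transpose_mulVec_eq_zero {𝕜 m n : Type*} [Field 𝕜]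
    [LinearOrder 𝕜] [IsStrictOrderedRing 𝕜] [Fintype m] {U : Matrix m n 𝕜}
    (h : 0 ∈ convexHull 𝕜 (range U.row)) : ∃ c : m → 𝕜, 0 ≤ c ∧ c ≠ 0 ∧ Uᵀ *ᵥ c = 0 := by
  rw [U.convexHull_range_eq_image_stdSimplex] at h
  obtain ⟨c, ⟨hc, hc1⟩, hcU⟩ := h
  refine ⟨c, hc, ?_, by rwa [mulVec_transpose]⟩
  rintro rfl
  simp at hc1

theorem exists_strongDual_pos_of_zero_notMem_convexHull {ι E : Type*} [Finite ι] [AddCommGroup E]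
    [Module ℝ E] [TopologicalSpace E] [IsTopologicalAddGroup E] [ContinuousSMul ℝ E]
    [LocallyConvexSpace ℝ E] [T2Space E] {v : ι → E} (h : 0 ∉ convexHull ℝ (range v)) :
    ∃ f : StrongDual ℝ E, ∀ i, 0 < f (v i) := by
  obtain ⟨f, u, hf0, hfu⟩ := geometric_hahn_banach_point_closed (convex_convexHull ℝ _)
    ((finite_range v).isCompact_convexHull ℝ).isClosed h
  rw [map_zero] at hf0
  exact ⟨f, fun i => hf0.trans (hfu _ (subset_convexHull ℝ _ (mem_range_self i)))⟩

theorem Matrix.exists_mulVec_pos_of_zero_notMem_convexHull {m n : Type*} [Finite m] [Fintype n]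
    {U : Matrix m n ℝ} (h : 0 ∉ convexHull ℝ (range U.row)) :
    ∃ x : n → ℝ, ∀ i, 0 < (U *ᵥ x) i := by
  classical
  obtain ⟨f, hf⟩ := exists_strongDual_pos_of_zero_notMem_convexHull h
  let x := (dotProductEquiv ℝ n).symm f.toLinearMap
  have hfx (y : n → ℝ) : f y = x ⬝ᵥ y := by
    rw [← dotProductEquiv_apply_apply, LinearEquiv.apply_symm_apply, ContinuousLinearMap.coe_coe]
  refine ⟨x, fun i => ?_⟩
  calc 0 < f (U.row i) := hf i
    _ = (U *ᵥ x) i := by rw [hfx, dotProduct_comm]; rfl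

/-- Gordan's Alternative Theorem: for a real `m×n` matrix `U`, exactly one of
the following holds: (a) there is `x` with `Ux > 0` componentwise;
(b) there is `c ≥ 0`, `c ≠ 0`, with `Uᵀc = 0`. -/
theorem gordan_alternative (m n : ℕ) (U : Matrix (Fin m) (Fin n) ℝ) :
    Xor' (∃ x : Fin n → ℝ, ∀ i, 0 < U.mulVec x i)
      (∃ c : Fin m → ℝ, (∀ i, 0 ≤ c i) ∧ c ≠ 0 ∧ Uᵀ.mulVec c = 0) := by
  by_cases h : (0 : Fin n → ℝ) ∈ convexHull ℝ (range U.row)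
  · obtain ⟨c, hc, hc0, hUc⟩ := exists_nonneg_ne_zero_transpose_mulVec_eq_zero h
    exact Or.inr ⟨⟨c, hc, hc0, hUc⟩, fun ⟨x, hx⟩ =>
      not_forall_mulVec_pos_of_transpose_mulVec_eq_zero hc hc0 hUc x hx⟩
  · obtain ⟨x, hx⟩ := exists_mulVec_pos_of_zero_notMem_convexHull h
    exact Or.inl ⟨⟨x, hx⟩, fun ⟨c, hc, hc0, hUc⟩ =>
      not_forall_mulVec_pos_of_transpose_mulVec_eq_zero hc hc0 hUc x hx⟩
end

section
/- With the test lattice basis B̃ = diag(1, …, 1, κ/2) ∈ ℝ^{d×d} (κ = 2⌈k/2⌉), one has Λ_{k,d}(B̃) = 2^{2-2/d} π² κ^{2/d}, where Λ_{k,d}(B) = λ_k(T_B)|det B|^{2/d} and λ_k(T_B) is the k-th smallest value (counted with multiplicity, indexed from 0 at value 0) of 4π²‖B^{-T}v‖² over v ∈ ℤ^d. -/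
open Real Matrix

/-- The `k`-th Laplacian eigenvalue of the flat torus `ℝ^d/Bℤ^d`, via the
Courant–Fischer formula (the `k`-th smallest value of `4π²‖B⁻ᵀv‖²` over
`v ∈ ℤ^d`, counted with multiplicity, indexed from 0). -/
noncomputable def lamk (d k : ℕ) (B : Matrix (Fin d) (Fin d) ℝ) : ℝ :=
  sInf { r : ℝ | ∃ E : Finset (Fin d → ℤ), E.card = k + 1 ∧
    r = sSup { t : ℝ | ∃ v ∈ E,
      t = 4 * π ^ 2 * ∑ i, ((B⁻¹)ᵀ.mulVec (fun j => ((v j : ℤ) : ℝ)) i) ^ 2 } }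

/-! The dual lattice of `diag(1, …, 1, K)` is `ℤ^(d-1) × K⁻¹ℤ`. Its vectors of norm `< 1` are
the `2K - 1` points `m/K · e_d` with `|m| < K`, while the `2K + 1` points with `|m| ≤ K` have
norm `≤ 1`. For `K = ⌈k/2⌉ = κ/2` we have `2K - 1 ≤ k ≤ 2K`, so the `k`-th eigenvalue is exactly
`4π²`, and `|det B̃| = κ/2` gives `Λ = 4π² (κ/2)^(2/d)`. -/

noncomputable section

/-- The `k`-th smallest value of `F`, counted with multiplicity and indexed from `0`. -/
def minimaxValue {α : Type*} (F : α → ℝ) (k : ℕ) : ℝ :=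
  sInf {r | ∃ E : Finset α, E.card = k + 1 ∧ r = sSup (F '' E)}

theorem minimaxValue_eq {α : Type*} {F : α → ℝ} {k : ℕ} {c : ℝ} {S E : Finset α}
    (hS : S.card ≤ k) (hF_lt : ∀ v, F v < c → v ∈ S)
    (hE : E.card = k + 1) (hF_le : ∀ v ∈ E, F v ≤ c) :
    minimaxValue F k = c := by
  have hc_le : ∀ E' : Finset α, E'.card = k + 1 → c ≤ sSup (F '' E') := by
    intro E' hE'
    obtain ⟨v, hvE', hvS⟩ :=
      Finset.exists_mem_notMem_of_card_lt_card (s := S) (t := E') (by omega)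
    exact (not_lt.1 fun h => hvS (hF_lt v h)).trans
      (le_csSup (E'.finite_toSet.image F).bddAbove ⟨v, hvE', rfl⟩)
  have hE_ne : (F '' E).Nonempty :=
    (Finset.coe_nonempty.2 (Finset.card_pos.1 (by omega))).image F
  apply le_antisymm
  · exact csInf_le_of_le ⟨c, by rintro _ ⟨E', hE', rfl⟩; exact hc_le E' hE'⟩ ⟨E, hE, rfl⟩
      (csSup_le hE_ne (by rintro _ ⟨v, hv, rfl⟩; exact hF_le v hv))
  · exact le_csInf ⟨_, E, hE, rfl⟩ (by rintro _ ⟨E', hE', rfl⟩; exact hc_le E' hE')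

section DiagonalLattice

variable {ι : Type*} [DecidableEq ι]

/-- The weights of the test basis `diag(1, …, 1, K)`, with `K` in coordinate `j`. -/
def testWeights (j : ι) (K : ℝ) : ι → ℝ :=
  fun i => if i = j then K else 1

theorem testWeights_ne_zero {j : ι} {K : ℝ} (hK : K ≠ 0) (i : ι) : testWeights j K i ≠ 0 := by
  unfold testWeights
  split_ifs <;> simp [hK]

variable [Fintype ι]

/-- `‖B⁻ᵀ v‖²` for the diagonal basis `B = diagonal b`. -/
def diagonalDualNormSq (b : ι → ℝ) (v : ι → ℤ) : ℝ :=
  ∑ i, ((v i : ℝ) / b i) ^ 2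

theorem lamk_diagonal {d : ℕ} (k : ℕ) {b : Fin d → ℝ} (hb : ∀ i, b i ≠ 0) :
    lamk d k (diagonal b) = minimaxValue (fun v => 4 * π ^ 2 * diagonalDualNormSq b v) k := by
  have hinv : (diagonal b)⁻¹ = diagonal b⁻¹ := by
    refine inv_eq_left_inv ?_
    rw [diagonal_mul_diagonal, ← diagonal_one]
    exact congrArg diagonal (funext fun i => inv_mul_cancel₀ (hb i))
  have hset : ∀ E : Finset (Fin d → ℤ),
      {t | ∃ v ∈ E, t = 4 * π ^ 2 * ∑ i, ((diagonal b)⁻¹ᵀ *ᵥ fun j => ((v j : ℤ) : ℝ)) i ^ 2} =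
        (fun v => 4 * π ^ 2 * diagonalDualNormSq b v) '' E := by
    intro E
    ext t
    simp [hinv, mulVec_diagonal, diagonalDualNormSq, div_eq_inv_mul, eq_comm]
  simp only [lamk, minimaxValue, hset]

variable {j : ι} {K : ℕ}

theorem diagonalDualNormSq_single (m : ℤ) :
    diagonalDualNormSq (testWeights j K) (Pi.single j m) = ((m : ℝ) / K) ^ 2 := by
  rw [diagonalDualNormSq, Finset.sum_eq_single j] <;> simp_all [testWeights]

theorem diagonalDualNormSq_single_le_one (hK : 0 < K) {m : ℤ} (hm : |m| ≤ K) :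
    diagonalDualNormSq (testWeights j K) (Pi.single j m) ≤ 1 := by
  have hK' : (0 : ℝ) < K := by exact_mod_cast hK
  have hm' : |(m : ℝ)| ≤ K := by exact_mod_cast hm
  rw [diagonalDualNormSq_single, div_pow, div_le_one (by positivity), ← sq_abs]
  exact pow_le_pow_left₀ (abs_nonneg _) hm' 2

theorem mem_image_single_of_diagonalDualNormSq_lt_one (hK : 0 < K) {v : ι → ℤ}
    (hv : diagonalDualNormSq (testWeights j K) v < 1) :
    v ∈ (Finset.Icc (1 - K : ℤ) (K - 1)).image (Pi.single j) := by
  have hK' : (0 : ℝ) < K := by exact_mod_cast hK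
  rw [diagonalDualNormSq] at hv
  have hterm : ∀ i, ((v i : ℝ) / testWeights j K i) ^ 2 < 1 := fun i =>
    (Finset.single_le_sum (f := fun i => ((v i : ℝ) / testWeights j K i) ^ 2)
      (fun i _ => sq_nonneg _) (Finset.mem_univ i)).trans_lt hv
  have hvj : (v j : ℝ) ^ 2 < (K : ℝ) ^ 2 := by
    have := hterm j
    rwa [testWeights, if_pos rfl, div_pow, div_lt_one (by positivity)] at this
  have hvj' : |v j| < K := by
    have := sq_lt_sq.1 hvj
    rw [abs_of_pos hK'] at this
    exact_mod_cast this
  obtain ⟨hlo, hhi⟩ := abs_lt.1 hvj'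
  refine Finset.mem_image.2 ⟨v j, Finset.mem_Icc.2 ⟨by omega, by omega⟩, ?_⟩
  ext i
  by_cases hi : i = j
  · subst hi; simp
  · have hvi : (v i : ℝ) ^ 2 < 1 := by simpa [testWeights, hi] using hterm i
    have : v i ^ 2 < 1 := by exact_mod_cast hvi
    simp only [Pi.single_apply, hi, if_false]
    nlinarith

theorem lamk_diagonal_testWeights {d : ℕ} {k : ℕ} (j : Fin d) (hK : 0 < K)
    (hkK : 2 * K ≤ k + 1) (hKk : k ≤ 2 * K) :
    lamk d k (diagonal (testWeights j K)) = 4 * π ^ 2 := by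
  rw [lamk_diagonal k (testWeights_ne_zero (by positivity))]
  refine minimaxValue_eq (S := (Finset.Icc (1 - K : ℤ) (K - 1)).image (Pi.single j))
    (E := (Finset.Icc (K - k : ℤ) K).image (Pi.single j)) ?_ ?_ ?_ ?_
  · rw [Finset.card_image_of_injective _ (Pi.single_injective j), Int.card_Icc]
    omega
  · intro v hv
    exact mem_image_single_of_diagonalDualNormSq_lt_one hK
      (lt_of_mul_lt_mul_left (by simpa using hv) (by positivity))
  · rw [Finset.card_image_of_injective _ (Pi.single_injective j), Int.card_Icc]
    omega
  · simp only [Finset.mem_image, Finset.mem_Icc]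
    rintro _ ⟨m, hm, rfl⟩
    exact mul_le_of_le_one_right (by positivity)
      (diagonalDualNormSq_single_le_one hK (abs_le.2 ⟨by omega, hm.2⟩))

theorem det_diagonal_testWeights (K : ℝ) : (diagonal (testWeights j K)).det = K := by
  simp [det_diagonal, testWeights, Finset.prod_ite_eq']

end DiagonalLattice

end

/-- Lagacé's lower bound: the test basis `B̃ = diag(1,…,1,κ/2)` satisfies
`Λ_{k,d}(B̃) = 2^{2-2/d} π² κ^{2/d}` where `κ = 2⌈k/2⌉`. -/
theorem Lamk_test_lattice (d k : ℕ) (hd : 1 ≤ d) (hk : 1 ≤ k) (κ : ℝ)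
    (hκ : κ = 2 * ((k + 1) / 2 : ℕ))
    (B : Matrix (Fin d) (Fin d) ℝ)
    (hB : B = Matrix.diagonal fun i : Fin d => if (i : ℕ) = d - 1 then κ / 2 else 1) :
    lamk d k B * |B.det| ^ ((2 : ℝ) / d) =
      (2 : ℝ) ^ ((2 : ℝ) - 2 / d) * π ^ 2 * κ ^ ((2 : ℝ) / d) := by
  set K := (k + 1) / 2
  have hB' : B = diagonal (testWeights ⟨d - 1, by omega⟩ (K : ℝ)) := by
    rw [hB, hκ]
    congr 1
    ext i
    simp [testWeights, Fin.ext_iff]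
  rw [hB', lamk_diagonal_testWeights _ (by omega) (by omega) (by omega),
    det_diagonal_testWeights, hκ, Nat.abs_cast, Real.mul_rpow (by norm_num) (by positivity),
    Real.rpow_sub two_pos, Real.rpow_two]
  field_simp
  ring
end
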